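/- Let A be a normalized deterministic parity tree automaton over a finite nonempty alphabet Σ. Then L(A) is a closed subset of T_Σ if and only if A contains no weak (1,2)-flower. -/

import Mathlib

open Filter

/-- A deterministic parity tree automaton over alphabet `Alpha` with state set `Q`. -/
structure DPTA (Alpha : Type) (Q : Type) where
  init : Q
  delta : Q → Alpha → Q × Q
  rank : Q → ℕ

namespace DPTA

variable {Alpha Q : Type}

/-- The state reached in one step from `q` reading letter `s` in direction `d`. -/
def next (M : DPTA Alpha Q) (q : Q) (s : Alpha) (d : Bool) : Q :=
  if d then (M.delta q s).2 else (M.delta q s).1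

/-- The state of the run started in `q` on the tree `t` at the node `v`
(nodes are words over `{0,1}`, head = first direction from the root). -/
def runFrom (M : DPTA Alpha Q) : Q → (List Bool → Alpha) → List Bool → Q
  | q, _, [] => q
  | q, t, d :: v => runFrom M (M.next q (t []) d) (fun u => t (d :: u)) v

/-- The state of the (unique) run of `M` on `t` at node `v`. -/
def run (M : DPTA Alpha Q) (t : List Bool → Alpha) (v : List Bool) : Q :=
  runFrom M M.init t v

/-- Parity acceptance: the largest value occurring infinitely often is even. -/
def ParityAccept (f : ℕ → ℕ) : Prop :=
  Even (sSup {r : ℕ | ∃ᶠ n in atTop, f n = r})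

/-- The prefix of length `n` of an infinite path. -/
def pref (π : ℕ → Bool) (n : ℕ) : List Bool :=
  List.ofFn fun i : Fin n => π i

/-- The run of `M` on `t` started at state `q` is accepting. -/
def AcceptsFrom (M : DPTA Alpha Q) (q : Q) (t : List Bool → Alpha) : Prop :=
  ∀ π : ℕ → Bool, ParityAccept fun n => M.rank (runFrom M q t (pref π n))

/-- The language recognised by `M`: trees with accepting run. -/
def Lang (M : DPTA Alpha Q) : Set (List Bool → Alpha) :=
  {t | M.AcceptsFrom M.init t}

/-- The state reached from `q` following a finite sequence of steps
(steps = letter together with direction). -/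
def follow (M : DPTA Alpha Q) (q : Q) (steps : List (Alpha × Bool)) : Q :=
  steps.foldl (fun p s => M.next p s.1 s.2) q

/-- All states visited along a path (the starting state included). -/
def statesOn (M : DPTA Alpha Q) (q : Q) (steps : List (Alpha × Bool)) : List Q :=
  List.scanl (fun p s => M.next p s.1 s.2) q steps

/-- The largest rank of a state visited along a path. -/
def maxRankOn (M : DPTA Alpha Q) (q : Q) (steps : List (Alpha × Bool)) : ℕ :=
  ((M.statesOn q steps).map M.rank).foldr max 0

/-- `steps` forms a loop at `q` (a path of positive length from `q` to `q`). -/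
def IsLoop (M : DPTA Alpha Q) (q : Q) (steps : List (Alpha × Bool)) : Prop :=
  steps ≠ [] ∧ M.follow q steps = q

/-- `M` contains an `(i,k)`-flower: loops `lam i, …, lam k` at a common state `q`,
the largest rank on `lam j` has the parity of `j` and increases strictly with `j`. -/
def HasFlower (M : DPTA Alpha Q) (i k : ℕ) : Prop :=
  ∃ (q : Q) (lam : ℕ → List (Alpha × Bool)),
    (∀ j, i ≤ j → j ≤ k → M.IsLoop q (lam j) ∧ M.maxRankOn q (lam j) % 2 = j % 2) ∧
    (∀ j, i ≤ j → j < k → M.maxRankOn q (lam j) < M.maxRankOn q (lam (j + 1)))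

/-- `q` is reachable from the initial state. -/
def Reachable (M : DPTA Alpha Q) (q : Q) : Prop :=
  ∃ steps, M.follow M.init steps = q

/-- `q` is productive: it occurs in some accepting run of `M`. -/
def Productive (M : DPTA Alpha Q) (q : Q) : Prop :=
  ∃ t ∈ M.Lang, ∃ v, M.run t v = q

/-- The transition from `q` reading `s` is used in some accepting run of `M`. -/
def ProductiveTrans (M : DPTA Alpha Q) (q : Q) (s : Alpha) : Prop :=
  ∃ t ∈ M.Lang, ∃ v, M.run t v = q ∧ t v = s

/-- `q` is all-rejecting: started from `q`, the automaton accepts no tree. -/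
def AllRejecting (M : DPTA Alpha Q) (q : Q) : Prop :=
  ∀ t, ¬ M.AcceptsFrom q t

/-- `M` is normalized: every state is reachable, every state is productive except
possibly one all-rejecting state `⊥` with `δ(⊥,σ) = (⊥,⊥)`, and every transition is
productive or of the form `δ(q,σ) = (⊥,⊥)`. -/
def Normalized (M : DPTA Alpha Q) : Prop :=
  (∀ q, M.Reachable q) ∧
  ∃ bot : Option Q,
    (∀ q, some q ≠ bot → M.Productive q) ∧
    (∀ q, some q = bot → M.AllRejecting q ∧ ∀ s, M.delta q s = (q, q)) ∧
    (∀ q s, M.ProductiveTrans q s ∨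
      (some (M.delta q s).1 = bot ∧ some (M.delta q s).2 = bot))

end DPTA


/-- `M` contains a weak `(i,k)`-flower: loops `lam i, …, lam k` such that there is a
path from a state of `lam j` to a state of `lam (j+1)`, and `lam j` is accepting
iff `j` is even. -/
def HasWeakFlower {Alpha Q : Type} (M : DPTA Alpha Q) (i k : ℕ) : Prop :=
  ∃ (q : ℕ → Q) (lam : ℕ → List (Alpha × Bool)),
    (∀ j, i ≤ j → j ≤ k →
      M.IsLoop (q j) (lam j) ∧ (Even (M.maxRankOn (q j) (lam j)) ↔ Even j)) ∧
    (∀ j, i ≤ j → j < k →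
      ∃ s ∈ M.statesOn (q j) (lam j), ∃ s' ∈ M.statesOn (q (j + 1)) (lam (j + 1)),
        ∃ steps, M.follow s steps = s')

/-!
If the run on a tree `t` rejects along some branch, that branch eventually cycles through a
rejecting loop. When `t` is a limit of accepted trees, one of them agrees with `t` along the
branch up to a repetition of that loop; its subtree there is accepted from the loop's state, so
any of its branches eventually cycles through an accepting loop, and the two loops form a weak
(1,2)-flower.

Conversely, let `λ₁` be a rejecting loop from which an accepting loop `λ₂` is reachable. The
`n`-th tree reads, along its main branch, a path from the initial state to `λ₁`, then `λ₁` `n`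
times, then a path to `λ₂`, and then `λ₂` forever; off that branch hang accepting trees, which
exist in a normalized automaton because the main branch never enters the all-rejecting sink.
These trees are accepted and converge to the tree whose main branch cycles through `λ₁`
forever, which is rejected.
-/

namespace DPTA

variable {Alpha Q : Type}

lemma parityAccept_iff_of_add_eq {f g : ℕ → ℕ} (N : ℕ) (h : ∀ m, f (m + N) = g m) :
    ParityAccept f ↔ ParityAccept g := by
  have key : ∀ r, (∃ᶠ n in atTop, f n = r) ↔ ∃ᶠ m in atTop, g m = r := fun r => by
    conv_lhs => rw [← Filter.map_add_atTop_eq_nat N]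
    simp only [Filter.frequently_map, h]
  simp only [ParityAccept, key]

lemma parityAccept_iff_of_periodic {g : ℕ → ℕ} {p : ℕ} (hg : Function.Periodic g p)
    (hp : 0 < p) : ParityAccept g ↔ Even (sSup (Set.range g)) := by
  have key : ∀ r, (∃ᶠ n in atTop, g n = r) ↔ r ∈ Set.range g := fun r => by
    refine ⟨fun h => h.exists, ?_⟩
    rintro ⟨m, rfl⟩
    exact Filter.frequently_atTop.2 fun a =>
      ⟨m + a * p, le_add_left (Nat.le_mul_of_pos_right a hp), hg.nat_mul a m⟩
  simp only [ParityAccept, key, Set.ofPred_mem_eq]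

lemma parityAccept_const (c : ℕ) : ParityAccept (fun _ => c) ↔ Even c := by
  rw [parityAccept_iff_of_periodic (p := 1) (fun _ => rfl) one_pos, Set.range_const,
    csSup_singleton]

lemma exists_lt_eq_and_rank_eq_sSup [Finite Q] (rk : Q → ℕ) (g : ℕ → Q) :
    ∃ i j, i < j ∧ g j = g i ∧ rk (g i) = sSup {r | ∃ᶠ n in atTop, rk (g n) = r} ∧
      ∀ n ≥ i, rk (g n) ≤ sSup {r | ∃ᶠ n in atTop, rk (g n) = r} := by
  set S := {r | ∃ᶠ n in atTop, rk (g n) = r}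
  have hrec : ∀ᶠ n in atTop, ∃ᶠ m in atTop, g m = g n := by
    have : ∀ x, ∀ᶠ n in atTop, g n = x → ∃ᶠ m in atTop, g m = x := fun x => by
      by_cases hx : ∃ᶠ m in atTop, g m = x
      · exact Eventually.of_forall fun _ _ => hx
      · exact (not_frequently.1 hx).mono fun n hn h => absurd h hn
    filter_upwards [Filter.eventually_all.2 this] with n hn using hn (g n) rfl
  obtain ⟨N, hN⟩ := eventually_atTop.1 hrec
  have hmem : ∀ n ≥ N, rk (g n) ∈ S := fun n hn => (hN n hn).mono fun m hm => by rw [hm]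
  have hbdd : BddAbove S := (Set.finite_range rk).bddAbove.mono fun r hr => by
    obtain ⟨n, rfl⟩ := hr.exists
    exact ⟨g n, rfl⟩
  obtain ⟨i, hiN, hi⟩ := frequently_atTop.1 (Nat.sSup_mem ⟨_, hmem N le_rfl⟩ hbdd) N
  obtain ⟨j, hij, hj⟩ := frequently_atTop.1 (hN i hiN) (i + 1)
  exact ⟨i, j, hij, hj, hi, fun n hn => le_csSup hbdd (hmem n (hiN.trans hn))⟩

section Paths

variable (M : DPTA Alpha Q)

lemma follow_append (q : Q) (l l' : List (Alpha × Bool)) :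
    M.follow q (l ++ l') = M.follow (M.follow q l) l' :=
  List.foldl_append

lemma mem_statesOn_iff {q x : Q} {l : List (Alpha × Bool)} :
    x ∈ M.statesOn q l ↔ ∃ i ≤ l.length, M.follow q (l.take i) = x := by
  simp only [statesOn, List.mem_iff_getElem, List.getElem_scanl, List.length_scanl,
    Nat.lt_succ_iff, exists_prop]
  rfl

lemma self_mem_statesOn (q : Q) (l : List (Alpha × Bool)) : q ∈ M.statesOn q l :=
  M.mem_statesOn_iff.2 ⟨0, Nat.zero_le _, rfl⟩

lemma isGreatest_maxRankOn (q : Q) (l : List (Alpha × Bool)) :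
    IsGreatest (M.rank '' {x | x ∈ M.statesOn q l}) (M.maxRankOn q l) := by
  have hne : (M.statesOn q l).map M.rank ≠ [] :=
    List.ne_nil_of_mem (List.mem_map_of_mem (M.self_mem_statesOn q l))
  refine ⟨?_, ?_⟩
  · obtain ⟨x, hx, hrank⟩ :=
      List.mem_map.1 (List.maximum_mem (List.foldr_max_of_ne_nil hne).symm)
    exact ⟨x, hx, hrank⟩
  · rintro _ ⟨x, hx, rfl⟩
    exact List.le_max_of_le (List.mem_map_of_mem hx) le_rfl

lemma follow_take_add (q : Q) (σ : Stream' (Alpha × Bool)) (m n : ℕ) :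
    M.follow q (σ.take (m + n)) = M.follow (M.follow q (σ.take m)) ((σ.drop m).take n) := by
  rw [Stream'.take_add, follow_append]

lemma follow_take_length_add (q : Q) (pre : List (Alpha × Bool)) (σ : Stream' (Alpha × Bool))
    (m : ℕ) : M.follow q ((pre ++ₛ σ).take (pre.length + m)) =
      M.follow (M.follow q pre) (σ.take m) := by
  rw [← Stream'.append_take, follow_append]

lemma mem_statesOn_drop_take {q x : Q} {σ : Stream' (Alpha × Bool)} {i k : ℕ} :
    x ∈ M.statesOn (M.follow q (σ.take i)) ((σ.drop i).take k) ↔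
      ∃ m ≤ k, M.follow q (σ.take (i + m)) = x := by
  rw [mem_statesOn_iff, Stream'.length_take]
  refine exists_congr fun m => and_congr_right fun hm => ?_
  rw [Stream'.take_take, min_eq_right hm, follow_take_add]

lemma exists_isLoop_even_maxRankOn_iff [Finite Q] (q : Q) (σ : Stream' (Alpha × Bool)) :
    ∃ i k, M.IsLoop (M.follow q (σ.take i)) ((σ.drop i).take k) ∧
      (Even (M.maxRankOn (M.follow q (σ.take i)) ((σ.drop i).take k)) ↔
        ParityAccept fun n => M.rank (M.follow q (σ.take n))) := by
  obtain ⟨i, j, hij, hloop, hmax, hle⟩ :=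
    exists_lt_eq_and_rank_eq_sSup M.rank fun n => M.follow q (σ.take n)
  obtain ⟨k, rfl⟩ := Nat.exists_eq_add_of_lt hij
  refine ⟨i, k + 1, ⟨by simp [← List.length_pos_iff], ?_⟩, ?_⟩
  · rw [← follow_take_add, ← add_assoc, hloop]
  · have hgreatest : IsGreatest
        (M.rank '' {x | x ∈ M.statesOn (M.follow q (σ.take i)) ((σ.drop i).take (k + 1))})
        (sSup {r | ∃ᶠ n in atTop, M.rank (M.follow q (σ.take n)) = r}) := by
      refine ⟨⟨_, M.self_mem_statesOn _ _, hmax⟩, ?_⟩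
      rintro _ ⟨x, hx, rfl⟩
      obtain ⟨m, -, rfl⟩ := M.mem_statesOn_drop_take.1 hx
      exact hle _ (Nat.le_add_right i m)
    rw [(M.isGreatest_maxRankOn _ _).unique hgreatest]
    rfl

lemma follow_take_cycle_periodic {q : Q} {l : List (Alpha × Bool)} (hl : M.IsLoop q l) :
    Function.Periodic (fun m => M.follow q ((Stream'.cycle l hl.1).take m)) l.length := by
  intro m
  have hcycle :
      (Stream'.cycle l hl.1).take (l.length + m) = l ++ (Stream'.cycle l hl.1).take m := by
    conv_lhs => rw [Stream'.cycle_eq l hl.1]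
    exact (Stream'.append_take _ _ _).symm
  simp only [add_comm m, hcycle, follow_append, hl.2]

lemma follow_take_append_cycle_mul {q p : Q} {pre l : List (Alpha × Bool)}
    (hpre : M.follow q pre = p) (hl : M.IsLoop p l) (n : ℕ) :
    M.follow q ((pre ++ₛ Stream'.cycle l hl.1).take (pre.length + n * l.length)) = p := by
  rw [follow_take_length_add, hpre]
  exact (M.follow_take_cycle_periodic hl).nat_mul_eq n

lemma parityAccept_follow_take_append_cycle {q p : Q} {pre l : List (Alpha × Bool)}
    (hpre : M.follow q pre = p) (hl : M.IsLoop p l) :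
    (ParityAccept fun n => M.rank (M.follow q ((pre ++ₛ Stream'.cycle l hl.1).take n))) ↔
      Even (M.maxRankOn p l) := by
  have hper := M.follow_take_cycle_periodic hl
  have hrange : Set.range (fun m => M.follow p ((Stream'.cycle l hl.1).take m)) =
      {x | x ∈ M.statesOn p l} := by
    ext x
    simp only [Set.mem_range, Set.mem_ofPred_eq, mem_statesOn_iff]
    have htake : ∀ i ≤ l.length, (Stream'.cycle l hl.1).take i = l.take i := fun i hi => by
      rw [Stream'.cycle_eq l hl.1, Stream'.take_append_of_le_length _ _ _ hi]
    constructor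
    · rintro ⟨m, rfl⟩
      refine ⟨m % l.length, (Nat.mod_lt _ (List.length_pos_iff.2 hl.1)).le, ?_⟩
      rw [← htake _ (Nat.mod_lt _ (List.length_pos_iff.2 hl.1)).le]
      exact hper.map_mod_nat m
    · rintro ⟨i, hi, rfl⟩
      exact ⟨i, by rw [htake i hi]⟩
  have hper' : Function.Periodic
      (fun m => M.rank (M.follow p ((Stream'.cycle l hl.1).take m))) l.length :=
    hper.comp M.rank
  rw [parityAccept_iff_of_add_eq pre.length fun m => by
      rw [add_comm, follow_take_length_add, hpre],
    parityAccept_iff_of_periodic hper' (List.length_pos_iff.2 hl.1), Set.range_comp', hrange,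
    (M.isGreatest_maxRankOn p l).csSup_eq]

lemma exists_follow_take_append_cycle_eq {q p : Q} {pre l : List (Alpha × Bool)}
    (hpre : M.follow q pre = p) (hl : M.IsLoop p l) (m : ℕ) :
    ∃ steps, M.follow (M.follow q ((pre ++ₛ Stream'.cycle l hl.1).take m)) steps = p := by
  have hm : m ≤ pre.length + m * l.length :=
    le_add_left (Nat.le_mul_of_pos_right m (List.length_pos_iff.2 hl.1))
  refine ⟨((pre ++ₛ Stream'.cycle l hl.1).drop m).take (pre.length + m * l.length - m), ?_⟩
  rw [← follow_take_add, Nat.add_sub_cancel' hm, M.follow_take_append_cycle_mul hpre hl]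

lemma hasWeakFlower_one_two_iff : HasWeakFlower M 1 2 ↔
    ∃ q₁ l₁ q₂ l₂ steps, M.IsLoop q₁ l₁ ∧ ¬ Even (M.maxRankOn q₁ l₁) ∧
      M.IsLoop q₂ l₂ ∧ Even (M.maxRankOn q₂ l₂) ∧ M.follow q₁ steps = q₂ := by
  constructor
  · rintro ⟨q, l, hloops, hpath⟩
    obtain ⟨hl₁, hodd⟩ := hloops 1 le_rfl one_le_two
    obtain ⟨hl₂, heven⟩ := hloops 2 one_le_two le_rfl
    obtain ⟨s, hs, s', hs', mid, hmid⟩ := hpath 1 le_rfl one_lt_two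
    obtain ⟨a, -, rfl⟩ := M.mem_statesOn_iff.1 hs
    obtain ⟨b, -, rfl⟩ := M.mem_statesOn_iff.1 hs'
    refine ⟨q 1, l 1, q 2, l 2, (l 1).take a ++ mid ++ (l 2).drop b, hl₁, by simpa using hodd,
      hl₂, heven.2 even_two, ?_⟩
    rw [follow_append, follow_append, hmid, ← follow_append, List.take_append_drop, hl₂.2]
  · rintro ⟨q₁, l₁, q₂, l₂, steps, hl₁, hodd, hl₂, heven, rfl⟩
    refine ⟨fun j => if j = 1 then q₁ else M.follow q₁ steps,
      fun j => if j = 1 then l₁ else l₂, fun j hj₁ hj₂ => ?_, fun j hj₁ hj₂ => ?_⟩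
    · interval_cases j <;> simp [hl₁, hl₂, hodd, heven]
    · obtain rfl : j = 1 := by omega
      exact ⟨q₁, M.self_mem_statesOn _ _, _, M.self_mem_statesOn _ _, steps, rfl⟩

end Paths

section Trees

variable (M : DPTA Alpha Q)

def subtree (t : List Bool → Alpha) (v : List Bool) : List Bool → Alpha := fun w => t (v ++ w)

lemma runFrom_append (q : Q) (t : List Bool → Alpha) (u v : List Bool) :
    M.runFrom q t (u ++ v) = M.runFrom (M.runFrom q t u) (subtree t u) v := by
  induction u generalizing q t with
  | nil => rfl
  | cons d u ih => exact ih _ _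

lemma runFrom_append_singleton (q : Q) (t : List Bool → Alpha) (v : List Bool) (d : Bool) :
    M.runFrom q t (v ++ [d]) = M.next (M.runFrom q t v) (t v) d := by
  rw [runFrom_append]
  simp only [runFrom, subtree, List.append_nil]

lemma pref_add (π : ℕ → Bool) (m n : ℕ) :
    pref π (m + n) = pref π m ++ pref (fun i => π (m + i)) n := by
  simp only [pref, List.ofFn_add, Fin.val_natAdd]
  rfl

lemma pref_succ (π : ℕ → Bool) (n : ℕ) : pref π (n + 1) = pref π n ++ [π n] :=
  pref_add π n 1

lemma pref_succ' (π : ℕ → Bool) (n : ℕ) :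
    pref π (n + 1) = π 0 :: pref (fun i => π (i + 1)) n := by
  simp only [pref, List.ofFn_succ, Fin.val_succ, Fin.val_zero]

def pathSteps (t : List Bool → Alpha) (π : ℕ → Bool) : Stream' (Alpha × Bool) :=
  fun n => (t (pref π n), π n)

lemma runFrom_pref (q : Q) (t : List Bool → Alpha) (π : ℕ → Bool) (n : ℕ) :
    M.runFrom q t (pref π n) = M.follow q ((pathSteps t π).take n) := by
  induction n with
  | zero => rfl
  | succ n ih =>
    rw [Stream'.take_succ', follow_append, ← ih, pref_succ, runFrom_append_singleton]
    rfl

lemma take_pathSteps_congr {t t' : List Bool → Alpha} {π : ℕ → Bool} {n : ℕ}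
    (h : ∀ m < n, t' (pref π m) = t (pref π m)) :
    (pathSteps t' π).take n = (pathSteps t π).take n :=
  List.ext_getElem (by simp) fun m hm _ => by
    rw [Stream'.length_take] at hm
    simp only [Stream'.take_get, Stream'.get, pathSteps, h m hm]

lemma parityAccept_rank_runFrom_iff_shift (q : Q) (t : List Bool → Alpha) (π : ℕ → Bool)
    (k : ℕ) : (ParityAccept fun n => M.rank (M.runFrom q t (pref π n))) ↔
      ParityAccept fun n => M.rank (M.runFrom (M.runFrom q t (pref π k)) (subtree t (pref π k))
        (pref (fun i => π (k + i)) n)) :=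
  parityAccept_iff_of_add_eq k fun n => by rw [add_comm, pref_add, runFrom_append]

lemma acceptsFrom_subtree {q : Q} {t : List Bool → Alpha} (h : M.AcceptsFrom q t)
    (v : List Bool) : M.AcceptsFrom (M.runFrom q t v) (subtree t v) := by
  intro π
  let π' : ℕ → Bool := fun n => if h : n < v.length then v[n] else π (n - v.length)
  have hv : pref π' v.length = v := List.ext_getElem (by simp [pref]) fun n hn _ => by
    simp_all [pref, π']
  have hπ : (fun i => π' (v.length + i)) = π := funext fun i => by simp [π']
  have := (M.parityAccept_rank_runFrom_iff_shift q t π' v.length).1 (h π')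
  rwa [hv, hπ] at this

lemma exists_acceptsFrom_next_of_productiveTrans {q : Q} {s : Alpha}
    (h : M.ProductiveTrans q s) (d : Bool) : ∃ u, M.AcceptsFrom (M.next q s d) u := by
  obtain ⟨t, ht, v, rfl, rfl⟩ := h
  have hacc := M.acceptsFrom_subtree ht (v ++ [d])
  rw [runFrom_append_singleton] at hacc
  exact ⟨_, hacc⟩

end Trees

lemma exists_eqOn_of_mem_closure {ι X : Type*} [TopologicalSpace X] [DiscreteTopology X]
    {S : Set (ι → X)} {t : ι → X} (ht : t ∈ closure S) {F : Set ι} (hF : F.Finite) :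
    ∃ t' ∈ S, Set.EqOn t' t F := by
  obtain ⟨t', ht'F, ht'S⟩ := mem_closure_iff.1 ht (F.pi fun v => {t v})
    (isOpen_set_pi hF fun _ _ => isOpen_discrete _) fun _ _ => rfl
  exact ⟨t', ht'S, ht'F⟩

lemma isClosed_lang_of_not_hasWeakFlower [Finite Q] [TopologicalSpace Alpha]
    [DiscreteTopology Alpha] (M : DPTA Alpha Q) (hnf : ¬ HasWeakFlower M 1 2) :
    IsClosed M.Lang := by
  refine isClosed_of_closure_subset fun t ht π => by_contra fun hrej => hnf ?_
  obtain ⟨i, k, hl₁, hpar₁⟩ := M.exists_isLoop_even_maxRankOn_iff M.init (pathSteps t π)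
  obtain ⟨t', ht', hagree⟩ :=
    exists_eqOn_of_mem_closure ht ((Set.finite_Iio (i + k)).image (pref π))
  set q₁ := M.follow M.init ((pathSteps t π).take i)
  have hq₁ : M.runFrom M.init t' (pref π (i + k)) = q₁ := by
    rw [runFrom_pref, take_pathSteps_congr fun m hm => hagree ⟨m, hm, rfl⟩, follow_take_add,
      hl₁.2]
  have hacc := M.acceptsFrom_subtree ht' (pref π (i + k))
  rw [hq₁] at hacc
  obtain ⟨i₂, k₂, hl₂, hpar₂⟩ :=
    M.exists_isLoop_even_maxRankOn_iff q₁ (pathSteps (subtree t' (pref π (i + k))) π)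
  refine M.hasWeakFlower_one_two_iff.2 ⟨_, _, _, _, _, hl₁, ?_, hl₂, ?_, rfl⟩
  · rw [hpar₁]
    simpa only [runFrom_pref] using hrej
  · rw [hpar₂]
    simpa only [runFrom_pref] using hacc π

section Sink

variable (M : DPTA Alpha Q) {x : Q}

lemma next_of_delta_eq (hx : ∀ s, M.delta x s = (x, x)) (s : Alpha) (d : Bool) :
    M.next x s d = x := by
  cases d <;> simp [next, hx]

lemma follow_of_delta_eq (hx : ∀ s, M.delta x s = (x, x)) (l : List (Alpha × Bool)) :
    M.follow x l = x := by
  induction l with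
  | nil => rfl
  | cons a l ih =>
    show M.follow (M.next x a.1 a.2) l = x
    rw [M.next_of_delta_eq hx, ih]

lemma runFrom_of_delta_eq (hx : ∀ s, M.delta x s = (x, x)) (t : List Bool → Alpha)
    (v : List Bool) : M.runFrom x t v = x := by
  induction v generalizing t with
  | nil => rfl
  | cons d v ih =>
    show M.runFrom (M.next x (t []) d) _ v = x
    rw [M.next_of_delta_eq hx, ih]

lemma not_even_maxRankOn_of_allRejecting {l : List (Alpha × Bool)} (hl : M.IsLoop x l)
    (hx : ∀ s, M.delta x s = (x, x)) (hrej : M.AllRejecting x) : ¬ Even (M.maxRankOn x l) := by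
  have hmax : M.maxRankOn x l = M.rank x := by
    refine (M.isGreatest_maxRankOn x l).unique ⟨⟨x, M.self_mem_statesOn x l, rfl⟩, ?_⟩
    rintro _ ⟨y, hy, rfl⟩
    obtain ⟨i, -, rfl⟩ := M.mem_statesOn_iff.1 hy
    rw [M.follow_of_delta_eq hx]
  obtain ⟨a, -⟩ := List.exists_mem_of_ne_nil l hl.1
  intro heven
  refine hrej (fun _ => a.1) fun π => ?_
  simp only [M.runFrom_of_delta_eq hx, parityAccept_const]
  rwa [← hmax]

/-- In a normalized automaton, the only transitions that are not productive lead to the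
all-rejecting sink, which lies on no accepting loop. -/
lemma Normalized.exists_acceptsFrom_next {M : DPTA Alpha Q} (hM : M.Normalized) {q p : Q}
    {s : Alpha} {d : Bool} {steps l : List (Alpha × Bool)}
    (hreach : M.follow (M.next q s d) steps = p) (hp : M.IsLoop p l)
    (heven : Even (M.maxRankOn p l)) (d' : Bool) : ∃ u, M.AcceptsFrom (M.next q s d') u := by
  obtain ⟨-, bot, -, hbot, htrans⟩ := hM
  refine (htrans q s).elim (fun h => M.exists_acceptsFrom_next_of_productiveTrans h d') ?_
  rintro ⟨h₁, h₂⟩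
  obtain ⟨hrej, hx⟩ := hbot (M.next q s d) (by cases d <;> assumption)
  rw [M.follow_of_delta_eq hx] at hreach
  subst hreach
  exact absurd heven (M.not_even_maxRankOn_of_allRejecting hp hx hrej)

end Sink

section SpineTree

variable [Nonempty Alpha] (M : DPTA Alpha Q)

noncomputable def acceptingTree (q : Q) : List Bool → Alpha :=
  Classical.epsilon (M.AcceptsFrom q)

noncomputable def spineTree : Q → Stream' (Alpha × Bool) → List Bool → Alpha
  | _, σ, [] => σ.head.1
  | q, σ, d :: v =>
    if d = σ.head.2 then spineTree (M.next q σ.head.1 d) σ.tail v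
    else M.acceptingTree (M.next q σ.head.1 d) v

lemma spineTree_cons_head (q : Q) (σ : Stream' (Alpha × Bool)) (v : List Bool) :
    M.spineTree q σ (σ.head.2 :: v) = M.spineTree (M.next q σ.head.1 σ.head.2) σ.tail v := by
  rw [spineTree, if_pos rfl]

lemma spineTree_pref (q : Q) (σ : Stream' (Alpha × Bool)) (n : ℕ) :
    M.spineTree q σ (pref (fun n => (σ.get n).2) n) = (σ.get n).1 := by
  induction n generalizing q σ with
  | zero => rfl
  | succ n ih =>
    rw [pref_succ']
    exact (M.spineTree_cons_head q σ _).trans (ih _ σ.tail)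

lemma pathSteps_spineTree (q : Q) (σ : Stream' (Alpha × Bool)) :
    pathSteps (M.spineTree q σ) (fun n => (σ.get n).2) = σ :=
  funext fun n => Prod.ext (M.spineTree_pref q σ n) rfl

lemma subtree_spineTree_off (q : Q) (σ : Stream' (Alpha × Bool)) (n : ℕ) {d : Bool}
    (hd : d ≠ (σ.get n).2) :
    subtree (M.spineTree q σ) (pref (fun n => (σ.get n).2) n ++ [d]) =
      M.acceptingTree (M.next (M.follow q (σ.take n)) (σ.get n).1 d) := by
  induction n generalizing q σ with
  | zero =>
    funext v
    exact if_neg hd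
  | succ n ih =>
    rw [pref_succ', List.cons_append, Stream'.take_succ]
    exact funext fun v => (M.spineTree_cons_head q σ _).trans (congrFun (ih _ σ.tail hd) v)

lemma spineTree_congr {σ σ' : Stream' (Alpha × Bool)} {n : ℕ} (h : σ.take n = σ'.take n)
    (q : Q) {v : List Bool} (hv : v.length < n) : M.spineTree q σ v = M.spineTree q σ' v := by
  obtain ⟨n, rfl⟩ := Nat.exists_eq_add_of_lt hv
  rw [Stream'.take_succ, Stream'.take_succ, List.cons.injEq] at h
  obtain ⟨hhead, htail⟩ := h
  cases v with
  | nil => simp only [spineTree, hhead]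
  | cons d v =>
    simp only [spineTree, hhead]
    split_ifs
    · exact spineTree_congr htail _ (by simp at hv ⊢; omega)
    · rfl

lemma parityAccept_of_acceptsFrom_spineTree {q : Q} {σ : Stream' (Alpha × Bool)}
    (h : M.AcceptsFrom q (M.spineTree q σ)) :
    ParityAccept fun n => M.rank (M.follow q (σ.take n)) := by
  simpa only [runFrom_pref, pathSteps_spineTree] using h fun n => (σ.get n).2

lemma acceptsFrom_spineTree {q : Q} {σ : Stream' (Alpha × Bool)}
    (hspine : ParityAccept fun n => M.rank (M.follow q (σ.take n)))
    (hoff : ∀ n, ∃ u,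
      M.AcceptsFrom (M.next (M.follow q (σ.take n)) (σ.get n).1 !(σ.get n).2) u) :
    M.AcceptsFrom q (M.spineTree q σ) := by
  intro π
  by_cases hπ : ∃ n, π n ≠ (σ.get n).2
  · classical
    let n := Nat.find hπ
    have hpref : pref π n = pref (fun n => (σ.get n).2) n :=
      congrArg List.ofFn (funext fun i => not_not.1 (Nat.find_min hπ i.2))
    have hπn : π n = !(σ.get n).2 := Bool.eq_not.2 (Nat.find_spec hπ)
    have hnode : pref π (n + 1) = pref (fun n => (σ.get n).2) n ++ [!(σ.get n).2] := by
      rw [pref_succ, hpref, hπn]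
    rw [M.parityAccept_rank_runFrom_iff_shift q _ π (n + 1), hnode, runFrom_append_singleton,
      subtree_spineTree_off M q σ n (by simp), runFrom_pref, pathSteps_spineTree, spineTree_pref]
    exact Classical.epsilon_spec (hoff n) _
  · push Not at hπ
    obtain rfl : π = fun n => (σ.get n).2 := funext hπ
    simpa only [runFrom_pref, pathSteps_spineTree] using hspine

end SpineTree

lemma not_isClosed_lang_of_hasWeakFlower [Nonempty Alpha] [TopologicalSpace Alpha]
    (M : DPTA Alpha Q) (hM : M.Normalized) (hf : HasWeakFlower M 1 2) : ¬ IsClosed M.Lang := by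
  obtain ⟨q₁, l₁, q₂, l₂, conn, hl₁, hodd, hl₂, heven, hconn⟩ :=
    M.hasWeakFlower_one_two_iff.1 hf
  obtain ⟨pre, hpre⟩ := hM.1 q₁
  set c₁ := Stream'.cycle l₁ hl₁.1
  set c₂ := Stream'.cycle l₂ hl₂.1
  let detour : ℕ → List (Alpha × Bool) := fun n => pre ++ (c₁.take (n * l₁.length) ++ conn)
  have hdetour : ∀ n, M.follow M.init (detour n) = q₂ := fun n => by
    rw [follow_append, follow_append, hpre,
      show M.follow q₁ (c₁.take (n * l₁.length)) = q₁ from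
        (M.follow_take_cycle_periodic hl₁).nat_mul_eq n, hconn]
  have hmem : ∀ n, M.spineTree M.init (detour n ++ₛ c₂) ∈ M.Lang := fun n => by
    refine M.acceptsFrom_spineTree
      ((M.parityAccept_follow_take_append_cycle (hdetour n) hl₂).2 heven) fun m => ?_
    obtain ⟨steps, hsteps⟩ := M.exists_follow_take_append_cycle_eq (hdetour n) hl₂ (m + 1)
    rw [Stream'.take_succ', follow_append] at hsteps
    exact hM.exists_acceptsFrom_next hsteps hl₂ heven _
  have hlim : M.spineTree M.init (pre ++ₛ c₁) ∉ M.Lang := fun h =>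
    hodd ((M.parityAccept_follow_take_append_cycle hpre hl₁).1
      (M.parityAccept_of_acceptsFrom_spineTree h))
  have htake : ∀ n, (detour n ++ₛ c₂).take (pre.length + n * l₁.length) =
      (pre ++ₛ c₁).take (pre.length + n * l₁.length) := fun n => by
    rw [Stream'.append_append_stream, ← Stream'.append_take, ← Stream'.append_take,
      Stream'.take_append_of_le_length _ _ _ (by simp), List.take_left' (Stream'.length_take _ _)]
  have hlimit : Tendsto (fun n => M.spineTree M.init (detour n ++ₛ c₂)) atTop
      (nhds (M.spineTree M.init (pre ++ₛ c₁))) := by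
    refine tendsto_pi_nhds.2 fun v => tendsto_const_nhds.congr' ?_
    filter_upwards [eventually_gt_atTop v.length] with n hn
    refine (M.spineTree_congr (htake n) M.init ?_).symm
    have := Nat.le_mul_of_pos_right n (List.length_pos_iff.2 hl₁.1)
    omega
  exact fun hcl => hlim (hcl.mem_of_tendsto hlimit (Eventually.of_forall hmem))

end DPTA

theorem closed_iff_no_weak_12_flower_general {Alpha Q : Type} [Nonempty Alpha] [Fintype Q]
    [TopologicalSpace Alpha] [DiscreteTopology Alpha]
    (M : DPTA Alpha Q) (hM : M.Normalized) :
    IsClosed M.Lang ↔ ¬ HasWeakFlower M 1 2 :=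
  ⟨fun hcl hf => M.not_isClosed_lang_of_hasWeakFlower hM hf hcl,
    M.isClosed_lang_of_not_hasWeakFlower⟩

/-- the language of a normalized deterministic tree automaton is closed
iff the automaton contains no weak `(1,2)`-flower. -/
theorem closed_iff_no_weak_12_flower {Alpha Q : Type} [Fintype Alpha] [Nonempty Alpha] [Fintype Q]
    [TopologicalSpace Alpha] [DiscreteTopology Alpha]
    (M : DPTA Alpha Q) (hM : M.Normalized) :
    IsClosed M.Lang ↔ ¬ HasWeakFlower M 1 2 :=
  closed_iff_no_weak_12_flower_general M hM
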